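/- arXiv:math/0702267 — 5 statements merged into one kernel-verified Lean document; each statement's English description precedes it below -/
import Mathlib

section
/- Let G be a labeled graph on V over F_q and let A, B ∈ K^V be such that det D(A,B) = c·I for some nonzero c ∈ F_q. Then the F_q-span of the rows of the n×2n matrix (I | G)·D(A,B), viewed as vectors in K^V, is an isotropic system (i.e., it is an n-dimensional subspace of K^V on which the bilinear form vanishes identically). -/
open Matrix

section Defs

variable {F : Type} [Field F] {V : Type} [Fintype V] [DecidableEq V]

/-- The bilinear form on `K = F × F`: `⟨(x,y),(x',y')⟩ = x·y' − x'·y`. -/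
def formK (a b : F × F) : F := a.1 * b.2 - b.1 * a.2

/-- The bilinear form on `K^V`: `⟨A,A'⟩ = Σ_v ⟨A v, A' v⟩`. -/
def formKV (A B : V → F × F) : F := ∑ v, formK (A v) (B v)

/-- An isotropic system: an `n`-dimensional subspace of `K^V` on which the form vanishes. -/
def IsIsotropic (L : Submodule F (V → F × F)) : Prop :=
  Module.finrank F L = Fintype.card V ∧ ∀ A ∈ L, ∀ B ∈ L, formKV A B = 0

/-- A labeled graph on `V` over `F`: a symmetric matrix with zero diagonal. -/
def IsLGraph (G : Matrix V V F) : Prop := G.IsSymm ∧ ∀ v, G v v = 0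

/-- The `2n × 2n` matrix `D(A,B)` with four diagonal blocks
`[[diag Z, diag T],[diag X, diag Y]]` where `A = (X,Y)`, `B = (Z,T)`. -/
def Dmat (A B : V → F × F) : Matrix (V ⊕ V) (V ⊕ V) F :=
  fromBlocks (diagonal fun v => (B v).1) (diagonal fun v => (B v).2)
    (diagonal fun v => (A v).1) (diagonal fun v => (A v).2)

/-- The diagonal entries of `det D(A,B) = (diag Z)(diag Y) − (diag X)(diag T)`. -/
def detD (A B : V → F × F) (v : V) : F := (B v).1 * (A v).2 - (A v).1 * (B v).2

/-- The `v`-th row of the `n × 2n` matrix `(I | G) · D(A,B)` viewed as a vector in `K^V`. -/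
def presRow (G : Matrix V V F) (A B : V → F × F) (v : V) : V → F × F :=
  fun w => ((fromCols (1 : Matrix V V F) G * Dmat A B) v (Sum.inl w),
            (fromCols (1 : Matrix V V F) G * Dmat A B) v (Sum.inr w))

/-- `(G, A, B)` is a graphic presentation of the isotropic system `L`:
`G` is a labeled graph, `det D(A,B) = c·I` with `c ≠ 0`, and the rows of
`(I | G)·D(A,B)` form a basis of `L`. -/
def IsGraphicPresentation (L : Submodule F (V → F × F)) (G : Matrix V V F)
    (A B : V → F × F) : Prop :=
  IsLGraph G ∧ (∃ c : F, c ≠ 0 ∧ ∀ v, detD A B v = c) ∧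
  LinearIndependent F (presRow G A B) ∧
  Submodule.span F (Set.range (presRow G A B)) = L

/-- `G` is a fundamental graph of `L`. -/
def IsFundamental (L : Submodule F (V → F × F)) (G : Matrix V V F) : Prop :=
  ∃ A B, IsGraphicPresentation L G A B

/-- The local complementation operation `G *_r v`. -/
def starOp (G : Matrix V V F) (r : F) (v : V) : Matrix V V F :=
  Matrix.of fun u w => if u = v ∨ w = v ∨ u = w then G u w else G u w + r * G v u * G v w

/-- The operation `G ∘_s v`, multiplying the edges at `v` by `s`. -/
def circOp (G : Matrix V V F) (s : F) (v : V) : Matrix V V F :=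
  Matrix.of fun u w => if u = v ∨ w = v then s * G u w else G u w

/-- One local operation. -/
def LocalStep (G H : Matrix V V F) : Prop :=
  (∃ v r, H = starOp G r v) ∨ (∃ v s, s ≠ (0 : F) ∧ H = circOp G s v)

/-- Two labeled graphs are locally equivalent if one is obtained from the other by a
finite sequence of operations `*_r v` and `∘_s v`. -/
def LocallyEquivalent (G H : Matrix V V F) : Prop :=
  Relation.ReflTransGen LocalStep G H

/-- A complete vector: all coordinates nonzero. -/
def CompleteVec (A : V → F × F) : Prop := ∀ v, A v ≠ 0

/-- `E_{v,x}`: the vector equal to `x` at `v` and `0` elsewhere. -/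
def Ev (v : V) (x : F × F) : V → F × F := fun w => if w = v then x else 0

/-- `Â`: the span of the vectors `A_v = E_{v, A v}`. -/
def hatSub (A : V → F × F) : Submodule F (V → F × F) :=
  Submodule.span F (Set.range fun v => Ev v (A v))

/-- An Eulerian vector of `L`: a complete vector with `Â ∩ L = 0`. -/
def IsEulerian (L : Submodule F (V → F × F)) (A : V → F × F) : Prop :=
  CompleteVec A ∧ hatSub A ⊓ L = ⊥

/-- `ε(L)`: the number of Eulerian vectors of `L`. -/
noncomputable def eulerCount (L : Submodule F (V → F × F)) : ℕ :=
  Set.ncard {A | IsEulerian L A}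

/-- The number of pairs `(A,B)` such that `(G,A,B)` is a graphic presentation of `L`. -/
noncomputable def lamCount (L : Submodule F (V → F × F)) (G : Matrix V V F) : ℕ :=
  Set.ncard {p : (V → F × F) × (V → F × F) | IsGraphicPresentation L G p.1 p.2}

/-- The number of graphic presentations (triples `(G,A,B)`) of `L`. -/
noncomputable def presCount (L : Submodule F (V → F × F)) : ℕ :=
  Set.ncard {t : Matrix V V F × (V → F × F) × (V → F × F) |
    IsGraphicPresentation L t.1 t.2.1 t.2.2}

/-- `l(G)`: the number of labeled graphs locally equivalent to `G`. -/
noncomputable def locCount (G : Matrix V V F) : ℕ :=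
  Set.ncard {H | LocallyEquivalent G H}

/-- Connectivity of a labeled graph: the simple graph with edges `{v,w}` with
`g_{vw} ≠ 0` is connected. -/
def GraphConnected (G : Matrix V V F) : Prop :=
  (SimpleGraph.fromRel fun v w => G v w ≠ 0).Connected

end Defs

variable {F : Type} [Field F] [Fintype F] {V : Type} [Fintype V] [DecidableEq V] [Nonempty V]



section Aux

variable {F : Type} [Field F] {V : Type} [Fintype V] [DecidableEq V]

lemma presRow_apply (G : Matrix V V F) (A B : V → F × F) (v w : V) :
    presRow G A B v w =
      ((if v = w then (B w).1 else 0) + G v w * (A w).1,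
       (if v = w then (B w).2 else 0) + G v w * (A w).2) := by
  simp only [presRow, Dmat, Matrix.mul_apply, Fintype.sum_sum_type,
    Matrix.fromCols, Matrix.fromBlocks, Matrix.of_apply, Sum.elim_inl, Sum.elim_inr,
    Matrix.diagonal_apply, Matrix.one_apply, ite_mul, mul_ite, zero_mul, mul_zero]
  simp [Finset.sum_ite_eq, Finset.sum_ite_eq']

lemma formKV_add_left (A A' B : V → F × F) :
    formKV (A + A') B = formKV A B + formKV A' B := by
  simp only [formKV, ← Finset.sum_add_distrib]
  refine Finset.sum_congr rfl fun v _ => ?_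
  simp only [formK, Pi.add_apply, Prod.fst_add, Prod.snd_add]; ring

lemma formKV_smul_left (r : F) (A B : V → F × F) :
    formKV (r • A) B = r * formKV A B := by
  simp only [formKV, Finset.mul_sum]
  refine Finset.sum_congr rfl fun v _ => ?_
  simp only [formK, Pi.smul_apply, Prod.smul_fst, Prod.smul_snd, smul_eq_mul]; ring

lemma formKV_comm_neg (A B : V → F × F) : formKV A B = - formKV B A := by
  simp only [formKV, ← Finset.sum_neg_distrib]
  refine Finset.sum_congr rfl fun v _ => ?_
  simp only [formK]; ring

lemma formKV_add_right (A B B' : V → F × F) :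
    formKV A (B + B') = formKV A B + formKV A B' := by
  rw [formKV_comm_neg, formKV_add_left, formKV_comm_neg B A, formKV_comm_neg B' A]; ring

lemma formKV_smul_right (r : F) (A B : V → F × F) :
    formKV A (r • B) = r * formKV A B := by
  rw [formKV_comm_neg, formKV_smul_left, formKV_comm_neg B A]; ring

lemma formKV_zero_left (B : V → F × F) : formKV 0 B = 0 := by
  simp [formKV, formK]

end Aux

/-- If `G` is a labeled graph and `det D(A,B) = c·I` with `c ≠ 0`, then the span
of the rows of `(I | G)·D(A,B)`, viewed as vectors in `K^V`, is an isotropic system. -/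
theorem span_presRows_isIsotropic (hchar : ringChar F ≠ 2)
    (G : Matrix V V F) (hG : IsLGraph G) (A B : V → F × F)
    (c : F) (hc : c ≠ 0) (hdet : ∀ v, detD A B v = c) :
    IsIsotropic (Submodule.span F (Set.range (presRow G A B))) := by
  constructor
  · -- dimension
    have hli : LinearIndependent F (presRow G A B) := by
      rw [Fintype.linearIndependent_iff]
      intro l hl w
      have hl' := congrFun hl w
      simp only [Finset.sum_apply, Pi.smul_apply, Pi.zero_apply, presRow_apply,
        Prod.smul_mk, smul_eq_mul] at hl'
      have h1 : l w * (B w).1 + (∑ v, l v * G v w) * (A w).1 = 0 := by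
        have h := congrArg Prod.fst hl'
        simp only [Prod.fst_sum, Prod.fst_zero] at h
        have e : l w * (B w).1 = ∑ x, l x * (if x = w then (B w).1 else 0) := by simp
        rw [e, Finset.sum_mul, ← Finset.sum_add_distrib]
        exact (Finset.sum_congr rfl fun v _ => by ring).trans h
      have h2 : l w * (B w).2 + (∑ v, l v * G v w) * (A w).2 = 0 := by
        have h := congrArg Prod.snd hl'
        simp only [Prod.snd_sum, Prod.snd_zero] at h
        have e : l w * (B w).2 = ∑ x, l x * (if x = w then (B w).2 else 0) := by simp
        rw [e, Finset.sum_mul, ← Finset.sum_add_distrib]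
        exact (Finset.sum_congr rfl fun v _ => by ring).trans h
      have hlc : l w * c = 0 := by
        have hd := hdet w
        simp only [detD] at hd
        linear_combination (A w).2 * h1 - (A w).1 * h2 - l w * hd
      exact (mul_eq_zero.mp hlc).resolve_right hc
    exact finrank_span_eq_card hli
  · -- isotropy
    have key : ∀ v u, formKV (presRow G A B v) (presRow G A B u) = 0 := by
      intro v u
      have hstep : ∀ w, formK (presRow G A B v w) (presRow G A B u w) =
          (if v = w then G u w * c else 0) - (if u = w then G v w * c else 0) := by
        intro w
        have hd := hdet w
        simp only [detD] at hd
        simp only [presRow_apply, formK]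
        by_cases hvw : v = w <;> by_cases huw : u = w
        · simp [hvw, huw]
        · simp [hvw, huw]; linear_combination (G u w) * hd
        · simp [hvw, huw]; linear_combination (-(G v w)) * hd
        · simp [hvw, huw]; ring
      have : formKV (presRow G A B v) (presRow G A B u) =
          ∑ w, ((if v = w then G u w * c else 0) - (if u = w then G v w * c else 0)) := by
        exact Finset.sum_congr rfl fun w _ => hstep w
      rw [this, Finset.sum_sub_distrib, Finset.sum_ite_eq, Finset.sum_ite_eq]
      have hsym : G u v = G v u := by
        have := hG.1
        rw [Matrix.IsSymm] at this
        calc G u v = Gᵀ v u := rfl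
        _ = G v u := by rw [this]
      simp [hsym]
    have keyR : ∀ v, ∀ Y ∈ Submodule.span F (Set.range (presRow G A B)),
        formKV (presRow G A B v) Y = 0 := by
      intro v Y hY
      induction hY using Submodule.span_induction with
      | mem y hy => obtain ⟨u, rfl⟩ := hy; exact key v u
      | zero => rw [formKV_comm_neg, formKV_zero_left, neg_zero]
      | add y z _ _ hy hz => rw [formKV_add_right, hy, hz, add_zero]
      | smul r y _ hy => rw [formKV_smul_right, hy, mul_zero]
    intro X hX Y hY
    induction hX using Submodule.span_induction with
    | mem x hx => obtain ⟨v, rfl⟩ := hx; exact keyR v Y hY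
    | zero => exact formKV_zero_left Y
    | add x y _ _ hx hy => rw [formKV_add_left, hx, hy, add_zero]
    | smul r x _ hx => rw [formKV_smul_left, hx, mul_zero]
end

section
/- Every isotropic system L on V has a graphic presentation; that is, there exist a labeled graph G on V over F_q and vectors A, B ∈ K^V with det D(A,B) = c·I for some nonzero c ∈ F_q such that the rows of (I | G)·D(A,B) form a basis of L. -/
open Matrix

section Aux

variable {F : Type} [Field F]

/-- `formK (·, a)` as a linear map. -/
def formKLin {F : Type} [Field F] (a : F × F) : (F × F) →ₗ[F] F where
  toFun x := formK x a
  map_add' x y := by simp [formK]; ring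
  map_smul' c x := by simp [formK, smul_eq_mul]; ring

lemma formKV_Ev_Ev {V : Type} [Fintype V] [DecidableEq V] (v : V) (x y : F × F) :
    formKV (Ev v x) (Ev v y) = formK x y := by
  unfold formKV
  rw [Finset.sum_eq_single v]
  · simp [Ev]
  · intro w _ hw
    simp [Ev, hw, formK]
  · intro h; exact absurd (Finset.mem_univ v) h

/-- Existence of an "Eulerian-type" vector for any totally isotropic subspace. -/
lemma euler_aux (n : ℕ) : ∀ (V : Type) [Fintype V] [DecidableEq V],
    Fintype.card V = n → ∀ (L : Submodule F (V → F × F)),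
    (∀ B ∈ L, ∀ C ∈ L, formKV B C = 0) →
    ∃ A : V → F × F, (∀ v, A v ≠ 0) ∧
      ∀ B ∈ L, (∀ v, ∃ c : F, B v = c • A v) → B = 0 := by
  induction n with
  | zero =>
    intro V _ _ hcard L _
    haveI := Fintype.card_eq_zero_iff.mp hcard
    exact ⟨fun _ => (1, 0), fun v => (IsEmpty.false v).elim,
      fun B _ _ => funext fun v => (IsEmpty.false v).elim⟩
  | succ n ih =>
    intro V _ _ hcard L hiso
    haveI : Nonempty V := Fintype.card_pos_iff.mp (by omega)
    obtain ⟨v⟩ := ‹Nonempty V›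
    have ha : ∃ a : F × F, a ≠ 0 ∧ Ev v a ∉ L := by
      by_contra h
      push_neg at h
      have h1 : Ev v ((1 : F), (0 : F)) ∈ L := h _ (by simp [Prod.ext_iff])
      have h2 : Ev v ((0 : F), (1 : F)) ∈ L := h _ (by simp [Prod.ext_iff])
      have h3 := hiso _ h1 _ h2
      rw [formKV_Ev_Ev] at h3
      simp [formK] at h3
    obtain ⟨a, ha0, haL⟩ := ha
    have hcard' : Fintype.card {w : V // w ≠ v} = n := by
      have h1 : Fintype.card {w : V // w ≠ v} = Fintype.card V - 1 := by
        simpa using Fintype.card_subtype_compl (fun w : V => w = v)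
      omega
    set res : (V → F × F) →ₗ[F] ({w : V // w ≠ v} → F × F) :=
      LinearMap.funLeft F (F × F) (fun w : {w : V // w ≠ v} => (w : V)) with hres
    set L' : Submodule F ({w : V // w ≠ v} → F × F) :=
      (L ⊓ Submodule.comap (LinearMap.proj v) (Submodule.span F {a})).map res with hL'
    have hsum : ∀ (B C : V → F × F),
        formKV B C = formK (B v) (C v) + formKV (res B) (res C) := by
      intro B C
      unfold formKV
      rw [← Finset.add_sum_erase Finset.univ _ (Finset.mem_univ v)]
      congr 1
      rw [Finset.sum_subtype (p := fun w => w ≠ v) (Finset.univ.erase v) (by simp)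
        (fun w => formK (B w) (C w))]
      rfl
    have hL'iso : ∀ B' ∈ L', ∀ C' ∈ L', formKV B' C' = 0 := by
      rintro B' ⟨B, ⟨hBL, hBv⟩, rfl⟩ C' ⟨C, ⟨hCL, hCv⟩, rfl⟩
      obtain ⟨c, hc⟩ := Submodule.mem_span_singleton.mp hBv
      obtain ⟨d, hd⟩ := Submodule.mem_span_singleton.mp hCv
      have h0 := hiso B hBL C hCL
      rw [hsum B C] at h0
      have h1 : formK (B v) (C v) = 0 := by
        have hBv' : B v = c • a := hc.symm
        have hCv' : C v = d • a := hd.symm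
        rw [hBv', hCv']
        simp [formK, smul_eq_mul]
        ring
      rw [h1, zero_add] at h0
      exact h0
    obtain ⟨A', hA'c, hA'L⟩ := ih {w : V // w ≠ v} hcard' L' hL'iso
    refine ⟨fun w => if h : w = v then a else A' ⟨w, h⟩, ?_, ?_⟩
    · intro w
      by_cases h : w = v
      · simpa [h] using ha0
      · simpa [h] using hA'c ⟨w, h⟩
    · intro B hBL hsp
      obtain ⟨c, hc⟩ := hsp v
      rw [show (fun w => if h : w = v then a else A' ⟨w, h⟩) v = a from dif_pos rfl] at hc
      have hBmem : B ∈ L ⊓ Submodule.comap (LinearMap.proj v) (Submodule.span F {a}) :=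
        ⟨hBL, Submodule.mem_span_singleton.mpr ⟨c, hc.symm⟩⟩
      have hres0 : res B = 0 := by
        apply hA'L (res B) ⟨B, hBmem, rfl⟩
        intro w'
        obtain ⟨d, hd⟩ := hsp w'.1
        rw [show (fun w => if h : w = v then a else A' ⟨w, h⟩) w'.1 = A' w'
          from dif_neg w'.2] at hd
        exact ⟨d, hd⟩
      have hB0 : ∀ w, w ≠ v → B w = 0 := fun w hw => congrFun hres0 ⟨w, hw⟩
      by_cases hc0 : c = 0
      · funext w
        by_cases h : w = v
        · subst h; rw [hc, hc0, zero_smul]; rfl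
        · exact hB0 w h
      · exfalso
        apply haL
        have hEq : Ev v a = c⁻¹ • B := by
          funext w
          by_cases h : w = v
          · subst h
            simp [Ev, hc, smul_smul, inv_mul_cancel₀ hc0]
          · simp [Ev, h, hB0 w h]
        rw [hEq]
        exact Submodule.smul_mem _ _ hBL

end Aux

variable {F : Type} [Field F] [Fintype F] {V : Type} [Fintype V] [DecidableEq V] [Nonempty V]


/-- Every isotropic system has a graphic presentation. -/
theorem exists_graphicPresentation (hchar : ringChar F ≠ 2)
    (L : Submodule F (V → F × F)) (hL : IsIsotropic L) :
    ∃ (G : Matrix V V F) (A B : V → F × F), IsGraphicPresentation L G A B := by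
  classical
  obtain ⟨A, hAc, hAL⟩ := euler_aux (Fintype.card V) V rfl L hL.2
  -- the span of the coordinate vectors E_{v, A v}
  set S : Submodule F (V → F × F) :=
    Submodule.span F (Set.range fun w => Ev w (A w)) with hS
  have hSmem : ∀ B ∈ S, ∀ u, ∃ c : F, B u = c • A u := by
    intro B hB u
    obtain ⟨c, hc⟩ := (Submodule.mem_span_range_iff_exists_fun (R := F)).mp hB
    refine ⟨c u, ?_⟩
    rw [← hc, Finset.sum_apply]
    have h1 : ∀ w, (c w • Ev w (A w)) u = if u = w then c w • A w else 0 := by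
      intro w
      simp only [Pi.smul_apply, Ev]
      split <;> simp
    rw [Finset.sum_congr rfl fun w _ => h1 w, Finset.sum_ite_eq]
    simp
  have hdisj : Disjoint S L :=
    Submodule.disjoint_def.mpr fun B hBS hBL => hAL B hBL (hSmem B hBS)
  have hindepEv : LinearIndependent F (fun w => Ev w (A w)) := by
    rw [Fintype.linearIndependent_iff]
    intro g hg w
    have h0 := congrFun hg w
    rw [Finset.sum_apply] at h0
    have h1 : ∀ u, (g u • Ev u (A u)) w = if w = u then g u • A u else 0 := by
      intro u
      simp only [Pi.smul_apply, Ev]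
      split <;> simp
    rw [Finset.sum_congr rfl fun u _ => h1 u, Finset.sum_ite_eq] at h0
    simp only [Finset.mem_univ, if_true, Pi.zero_apply] at h0
    rcases smul_eq_zero.mp h0 with h | h
    · exact h
    · exact absurd h (hAc w)
  have hrankS : Module.finrank F S = Fintype.card V := finrank_span_eq_card hindepEv
  have hrankTop : Module.finrank F (V → F × F) = Fintype.card V + Fintype.card V := by
    have h2 : Module.finrank F (F × F) = 2 := by
      rw [Module.finrank_prod, Module.finrank_self]
    rw [Module.finrank_pi_fintype]
    simp only [h2, Finset.sum_const, smul_eq_mul, Finset.card_univ]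
    ring
  have hsup : S ⊔ L = ⊤ :=
    Submodule.eq_top_of_disjoint _ _ (by rw [hrankS, hL.1, hrankTop]) hdisj
  -- pick c_v with formK (c_v, A v) = 1
  have hcv : ∀ v, ∃ cv : F × F, formK cv (A v) = 1 := by
    intro v
    by_cases h : (A v).2 = 0
    · have h1 : (A v).1 ≠ 0 := by
        intro h1
        exact hAc v (Prod.ext h1 h)
      refine ⟨(0, -((A v).1)⁻¹), ?_⟩
      simp [formK, h1]
    · refine ⟨(((A v).2)⁻¹, 0), ?_⟩
      simp [formK, h]
  choose cv hcv using hcv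
  -- decompose Ev v (cv v) along S ⊔ L = ⊤
  have hdec : ∀ v, ∃ (g : V → F) (τ : V → F × F), τ ∈ L ∧
      Ev v (cv v) = (∑ w, g w • Ev w (A w)) + τ := by
    intro v
    have hmem : Ev v (cv v) ∈ S ⊔ L := by rw [hsup]; exact Submodule.mem_top
    obtain ⟨h, hh, τ, hτ, heq⟩ := Submodule.mem_sup.mp hmem
    obtain ⟨g, hg⟩ := (Submodule.mem_span_range_iff_exists_fun (R := F)).mp hh
    exact ⟨g, τ, hτ, by rw [hg, heq]⟩
  choose g τ hτL hτeq using hdec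
  set B : V → F × F := fun v => cv v - g v v • A v with hB
  set G : Matrix V V F := Matrix.of fun u w => if u = w then (0 : F) else -(g u w) with hGdef
  have hGdiag : ∀ u, G u u = 0 := fun u => if_pos rfl
  have hGoff : ∀ u w, u ≠ w → G u w = -(g u w) := fun u w h => if_neg h
  have hdet : ∀ v, detD A B v = 1 := by
    intro v
    have h1 := hcv v
    simp only [formK] at h1
    simp only [detD, hB, Prod.fst_sub, Prod.snd_sub, Prod.smul_fst, Prod.smul_snd,
      smul_eq_mul]
    linear_combination h1
  -- the value of τ at each coordinate
  have hτval : ∀ u w, τ u w = (if u = w then B w else 0) + G u w • A w := by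
    intro u w
    have h0 := congrFun (hτeq u) w
    rw [Pi.add_apply, Finset.sum_apply] at h0
    have h1 : ∀ w', (g u w' • Ev w' (A w')) w = if w = w' then g u w' • A w' else 0 := by
      intro w'
      simp only [Pi.smul_apply, Ev]
      split <;> simp
    rw [Finset.sum_congr rfl fun w' _ => h1 w', Finset.sum_ite_eq] at h0
    simp only [Finset.mem_univ, if_true] at h0
    have h2 : Ev u (cv u) w = if w = u then cv u else 0 := rfl
    rw [h2] at h0
    by_cases h : u = w
    · subst h
      simp only [if_pos rfl] at h0 ⊢
      rw [hGdiag, zero_smul, add_zero, hB]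
      exact eq_sub_iff_add_eq'.mpr h0.symm
    · rw [if_neg (fun hh => h hh.symm)] at h0
      rw [if_neg h, hGoff u w h, zero_add, neg_smul]
      exact eq_neg_of_add_eq_zero_right h0.symm
  -- the rows of (I | G) D(A,B)
  have hrow : ∀ u w, presRow G A B u w = (if u = w then B w else 0) + G u w • A w := by
    intro u w
    have hmat : fromCols (1 : Matrix V V F) G * Dmat A B =
        fromCols ((diagonal fun v => (B v).1) + G * diagonal fun v => (A v).1)
          ((diagonal fun v => (B v).2) + G * diagonal fun v => (A v).2) := by
      unfold Dmat
      rw [fromCols_mul_fromBlocks, Matrix.one_mul, Matrix.one_mul]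
    unfold presRow
    rw [hmat, fromCols_apply_inl, fromCols_apply_inr]
    by_cases h : u = w
    · subst h
      simp [Matrix.add_apply, Matrix.mul_diagonal, Matrix.diagonal_apply_eq, Prod.ext_iff]
    · simp [Matrix.add_apply, Matrix.mul_diagonal, Matrix.diagonal_apply_ne _ h, h,
        Prod.ext_iff]
  have hpres : presRow G A B = τ := by
    funext u w
    rw [hrow, ← hτval]
  -- linear independence
  have hindep : LinearIndependent F (presRow G A B) := by
    rw [Fintype.linearIndependent_iff]
    intro μ hμ w
    have h0 := congrFun hμ w
    rw [Finset.sum_apply] at h0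
    have h1 : ∀ u, formKLin (A w) ((μ u • presRow G A B u) w)
        = μ u * (if u = w then 1 else 0) := by
      intro u
      rw [Pi.smul_apply, hrow]
      by_cases h : u = w
      · subst h
        have hd := hdet u
        simp only [detD] at hd
        simp only [if_pos rfl, eq_self_iff_true, if_true, formKLin, formK,
          LinearMap.coe_mk, AddHom.coe_mk,
          Prod.smul_fst, Prod.smul_snd, Prod.fst_add, Prod.snd_add, smul_eq_mul]
        linear_combination μ u * hd
      · simp only [if_neg h, zero_add, formKLin, formK, LinearMap.coe_mk, AddHom.coe_mk,
          Prod.smul_fst, Prod.smul_snd, smul_eq_mul]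
        ring
    have h2 : ∑ u, formKLin (A w) ((μ u • presRow G A B u) w) = 0 := by
      rw [← map_sum, h0]
      simp
    rw [Finset.sum_congr rfl fun u _ => h1 u] at h2
    simpa using h2
  -- symmetry of G
  have hsymm : G.IsSymm := by
    apply Matrix.ext
    intro i j
    rw [Matrix.transpose_apply]
    by_cases hij : i = j
    · rw [hij]
    · have h0 := hL.2 (τ i) (hτL i) (τ j) (hτL j)
      have hterm : ∀ w, formK (τ i w) (τ j w) =
          (if i = w then G j i else 0) - (if j = w then G i j else 0) := by
        intro w
        rw [hτval i w, hτval j w]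
        by_cases h1 : i = w <;> by_cases h2 : j = w
        · exact absurd (h1.trans h2.symm) hij
        · subst h1
          have hd := hdet i
          simp only [detD] at hd
          simp only [if_pos rfl, if_neg h2, eq_self_iff_true, if_true, hGdiag,
            zero_smul, add_zero, zero_add,
            formK, Prod.smul_fst, Prod.smul_snd, Prod.fst_add, Prod.snd_add,
            smul_eq_mul]
          linear_combination G j i * hd
        · subst h2
          have hd := hdet j
          simp only [detD] at hd
          simp only [if_pos rfl, if_neg h1, eq_self_iff_true, if_true, hGdiag,
            zero_smul, add_zero, zero_add,
            formK, Prod.smul_fst, Prod.smul_snd, Prod.fst_add, Prod.snd_add,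
            smul_eq_mul]
          linear_combination (-(G i j)) * hd
        · simp only [if_neg h1, if_neg h2, zero_add, formK, Prod.smul_fst,
            Prod.smul_snd, smul_eq_mul]
          ring
      unfold formKV at h0
      rw [Finset.sum_congr rfl fun w _ => hterm w, Finset.sum_sub_distrib,
        Finset.sum_ite_eq, Finset.sum_ite_eq] at h0
      simp only [Finset.mem_univ, if_true] at h0
      exact sub_eq_zero.mp h0
  -- span
  have hspan : Submodule.span F (Set.range (presRow G A B)) = L := by
    have hle : Submodule.span F (Set.range (presRow G A B)) ≤ L := by
      rw [Submodule.span_le, hpres]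
      exact Set.range_subset_iff.mpr hτL
    apply Submodule.eq_of_le_of_finrank_eq hle
    rw [finrank_span_eq_card hindep, hL.1]
  exact ⟨G, A, B, ⟨hsymm, hGdiag⟩, ⟨1, one_ne_zero, hdet⟩, hindep, hspan⟩
end

section
/- If (G, A, B) is a graphic presentation of an isotropic system L, then A is an Eulerian vector of L; that is, A is complete and the span of {A_v : v ∈ V} intersects L trivially. -/
open Matrix

variable {F : Type} [Field F] [Fintype F] {V : Type} [Fintype V] [DecidableEq V] [Nonempty V]


/-- If `(G,A,B)` is a graphic presentation of `L`, then `A` is an Eulerian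
vector of `L`. -/
theorem graphicPresentation_eulerian (hchar : ringChar F ≠ 2)
    (L : Submodule F (V → F × F)) (hL : IsIsotropic L)
    (G : Matrix V V F) (A B : V → F × F) (hpres : IsGraphicPresentation L G A B) :
    IsEulerian L A := by
  obtain ⟨hG, ⟨c, hc, hdet⟩, hli, hspan⟩ := hpres
  have hA : CompleteVec A := by
    intro v hv
    apply hc
    rw [← hdet v]
    simp [detD, hv]
  refine ⟨hA, ?_⟩
  have hrow : ∀ v w, presRow G A B v w =
      ((if v = w then (B w).1 else 0) + G v w * (A w).1,
       (if v = w then (B w).2 else 0) + G v w * (A w).2) := by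
    intro v w
    simp [presRow, Dmat, fromCols_mul_fromBlocks, fromCols_apply_inl,
      fromCols_apply_inr, Matrix.add_apply, Matrix.one_mul, Matrix.mul_diagonal,
      Matrix.one_apply, Matrix.diagonal_apply]
    constructor <;> split <;> simp_all
  have hform : ∀ v w, formK (presRow G A B v w) (A w) = if v = w then c else 0 := by
    intro v w
    rw [hrow, ← hdet w]
    simp only [formK, detD]
    split <;> ring
  rw [Submodule.eq_bot_iff]
  intro u hu
  obtain ⟨hu1, hu2⟩ := Submodule.mem_inf.mp hu
  have hμ : ∀ w, ∃ μ : F, u w = μ • A w := by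
    intro w
    have hle : hatSub A ≤ Submodule.pi Set.univ (fun w => Submodule.span F {A w}) := by
      rw [hatSub, Submodule.span_le]
      rintro _ ⟨v, rfl⟩ w _
      by_cases h : w = v
      · subst h; simp [Ev, Submodule.mem_span_singleton_self]
      · simp [Ev, h]
    have : u w ∈ Submodule.span F {A w} := hle hu1 w (Set.mem_univ w)
    rw [Submodule.mem_span_singleton] at this
    obtain ⟨a, ha⟩ := this
    exact ⟨a, ha.symm⟩
  choose μ hμ using hμ
  have hz : ∀ v, formKV (presRow G A B v) u = 0 := by
    intro v
    refine hL.2 _ ?_ _ hu2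
    rw [← hspan]
    exact Submodule.subset_span ⟨v, rfl⟩
  funext v
  have h0 := hz v
  rw [formKV] at h0
  have hterm : ∀ w, formK (presRow G A B v w) (u w) = μ w * (if v = w then c else 0) := by
    intro w
    rw [hμ w, ← hform v w]
    simp only [formK, Prod.smul_fst, Prod.smul_snd, smul_eq_mul]
    ring
  rw [Finset.sum_congr rfl (fun w _ => hterm w)] at h0
  simp only [mul_ite, mul_zero, Finset.sum_ite_eq, Finset.mem_univ, if_true] at h0
  have : μ v = 0 := by
    rcases mul_eq_zero.mp h0 with h | h
    · exact h
    · exact absurd h hc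
  show u v = 0
  rw [hμ v, this, zero_smul]
end

section
/- Every isotropic system L on V has at least one Eulerian vector. -/
open Matrix

set_option linter.unusedSectionVars false

section Aux

variable {F : Type} [Field F] {V : Type} [Fintype V] [DecidableEq V]

/-- The bilinear form `formKV` as a mathlib `BilinForm`. -/
def bformAux : LinearMap.BilinForm F (V → F × F) :=
  LinearMap.mk₂ F formKV
    (fun A A' B => by
      simp only [formKV, formK, ← Finset.sum_add_distrib]
      exact Finset.sum_congr rfl fun v _ => by simp [Pi.add_apply]; ring)
    (fun c A B => by
      simp only [formKV, formK, smul_eq_mul, Finset.mul_sum]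
      refine Finset.sum_congr rfl fun v _ => ?_
      simp only [Pi.smul_apply, Prod.smul_fst, Prod.smul_snd, smul_eq_mul]
      ring)
    (fun A B B' => by
      simp only [formKV, formK, ← Finset.sum_add_distrib]
      exact Finset.sum_congr rfl fun v _ => by simp [Pi.add_apply]; ring)
    (fun c A B => by
      simp only [formKV, formK, smul_eq_mul, Finset.mul_sum]
      refine Finset.sum_congr rfl fun v _ => ?_
      simp only [Pi.smul_apply, Prod.smul_fst, Prod.smul_snd, smul_eq_mul]
      ring)

lemma bformAux_apply (A B : V → F × F) : bformAux A B = formKV A B := rfl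

lemma formKV_Ev (A : V → F × F) (v : V) (x : F × F) :
    formKV A (Ev v x) = formK (A v) x := by
  rw [formKV]
  rw [Finset.sum_eq_single v]
  · simp [Ev]
  · intro w _ hw
    simp [Ev, hw, formK]
  · simp

lemma bformAux_alt : (bformAux (F := F) (V := V)).IsAlt := by
  intro A
  rw [bformAux_apply, formKV]
  exact Finset.sum_eq_zero fun v _ => by simp [formK]

lemma bformAux_nondeg : (bformAux (F := F) (V := V)).Nondegenerate := by
  refine (LinearMap.IsRefl.nondegenerate_iff_separatingLeft
    (LinearMap.IsAlt.isRefl (B := bformAux (F := F) (V := V)) bformAux_alt)).mpr ?_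
  intro A hA
  funext v
  have h1 := hA (Ev v (0, 1))
  have h2 := hA (Ev v (1, 0))
  rw [bformAux_apply, formKV_Ev] at h1 h2
  simp [formK] at h1 h2
  exact Prod.ext h1 (by simpa using h2)

lemma finrank_KV : Module.finrank F (V → F × F) = 2 * Fintype.card V := by
  simp [Module.finrank_pi_fintype, Module.finrank_prod, mul_comm, Finset.sum_const]

/-- Lagrangian dimension bound: isotropic subspaces of `K^V` have dimension `≤ |V|`. -/
lemma isotropic_finrank_le (W : Submodule F (V → F × F))
    (hW : ∀ A ∈ W, ∀ B ∈ W, formKV A B = 0) :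
    Module.finrank F W ≤ Fintype.card V := by
  have hrefl : (bformAux (F := F) (V := V)).IsRefl := bformAux_alt.isRefl
  have hle : W ≤ bformAux.orthogonal W := by
    intro B hB A hA
    exact hW A hA B hB
  have h1 := LinearMap.BilinForm.finrank_add_finrank_orthogonal hrefl W
  rw [LinearMap.BilinForm.orthogonal_top_eq_bot bformAux_nondeg, inf_bot_eq,
    finrank_bot, add_zero, finrank_KV] at h1
  have h2 : Module.finrank F W ≤ Module.finrank F (bformAux.orthogonal W) :=
    Submodule.finrank_mono hle
  omega

/-- The linear map `c ↦ (v ↦ c v • A v)`. -/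
def coordMap (A : V → F × F) : (V → F) →ₗ[F] (V → F × F) where
  toFun c := fun v => c v • A v
  map_add' c d := by funext v; simp [add_smul]
  map_smul' r c := by funext v; simp [smul_smul]

lemma hatSub_eq_range (A : V → F × F) :
    hatSub A = LinearMap.range (coordMap A) := by
  apply le_antisymm
  · rw [hatSub, Submodule.span_le]
    rintro _ ⟨v, rfl⟩
    refine ⟨fun w => if w = v then 1 else 0, ?_⟩
    funext w
    by_cases h : w = v <;> simp [coordMap, Ev, h]
  · rintro _ ⟨c, rfl⟩
    have he : coordMap A c = ∑ v, c v • Ev v (A v) := by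
      funext w
      simp only [coordMap, LinearMap.coe_mk, AddHom.coe_mk, Finset.sum_apply, Pi.smul_apply, Ev]
      rw [Finset.sum_eq_single w]
      · simp
      · intro v _ hv; simp [Ne.symm hv]
      · simp
    rw [he]
    exact Submodule.sum_smul_mem _ _ fun v _ => Submodule.subset_span ⟨v, rfl⟩

lemma mem_hatSub {A B : V → F × F} :
    B ∈ hatSub A ↔ ∃ c : V → F, ∀ v, B v = c v • A v := by
  rw [hatSub_eq_range]
  constructor
  · rintro ⟨c, rfl⟩; exact ⟨c, fun v => rfl⟩
  · rintro ⟨c, hc⟩; exact ⟨c, by funext v; exact (hc v).symm⟩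

end Aux

section Key

variable {F : Type} [Field F]

lemma key_eulerian : ∀ (n : ℕ) (V : Type) [Fintype V] [DecidableEq V],
    Fintype.card V = n →
    ∀ (L : Submodule F (V → F × F)), Module.finrank F L = n →
    (∀ A ∈ L, ∀ B ∈ L, formKV A B = 0) →
    ∃ A : V → F × F, (∀ v, A v ≠ 0) ∧ hatSub A ⊓ L = ⊥ := by
  intro n
  induction n with
  | zero =>
    intro V _ _ hcard L _ _
    haveI : IsEmpty V := Fintype.card_eq_zero_iff.mp hcard
    haveI : Subsingleton (V → F × F) := ⟨fun f g => funext fun v => isEmptyElim v⟩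
    refine ⟨fun _ => (1, 0), fun v => isEmptyElim v, ?_⟩
    rw [Submodule.eq_bot_iff]
    intro B _
    exact Subsingleton.elim B 0
  | succ n IH =>
    intro V _ _ hcard L hdim hiso
    have hne : Nonempty V := Fintype.card_pos_iff.mp (by omega)
    obtain ⟨v₀⟩ := hne
    set V' := {v : V // v ≠ v₀} with hV'
    have hcard' : Fintype.card V' = n := by
      have h1 : Fintype.card V' = Fintype.card V - 1 := by
        simp [hV', Fintype.card_subtype_compl]
      omega
    set e : (V → F × F) →ₗ[F] F × F := LinearMap.proj v₀ with he
    set ρ : (V → F × F) →ₗ[F] (V' → F × F) :=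
      LinearMap.funLeft F (F × F) Subtype.val with hρ
    have hρ_apply : ∀ (B : V → F × F) (w : V'), ρ B w = B w.val := fun B w => rfl
    -- the subspace S of K consisting of values at v₀ of elements of L supported on {v₀}
    set S : Submodule F (F × F) := (L ⊓ LinearMap.ker ρ).map e with hSdef
    have hS : S ≠ ⊤ := by
      intro htop
      have h1 : ((1 : F), (0 : F)) ∈ S := htop ▸ Submodule.mem_top
      have h2 : ((0 : F), (1 : F)) ∈ S := htop ▸ Submodule.mem_top
      obtain ⟨B, hB, hBe⟩ := h1
      obtain ⟨C, hC, hCe⟩ := h2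
      have hB0 : ∀ v, v ≠ v₀ → B v = 0 := fun v hv =>
        congrFun (LinearMap.mem_ker.mp hB.2) ⟨v, hv⟩
      have hform := hiso B hB.1 C hC.1
      rw [formKV, Finset.sum_eq_single v₀ (fun v _ hv => by simp [hB0 v hv, formK])
        (by simp)] at hform
      rw [show B v₀ = ((1:F),(0:F)) from hBe, show C v₀ = ((0:F),(1:F)) from hCe] at hform
      simp [formK] at hform
    obtain ⟨x, hx⟩ : ∃ x, x ∉ S := by
      by_contra h
      push_neg at h
      exact hS (Submodule.eq_top_iff'.mpr h)
    have hx0 : x ≠ 0 := fun h => hx (h ▸ S.zero_mem)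
    set ℓ : Submodule F (F × F) := Submodule.span F {x} with hℓ
    have hℓS : ∀ y, y ∈ ℓ → y ∈ S → y = 0 := by
      intro y hy hyS
      obtain ⟨c, rfl⟩ := Submodule.mem_span_singleton.mp hy
      by_cases hc : c = 0
      · simp [hc]
      · exfalso
        apply hx
        have := S.smul_mem c⁻¹ hyS
        rwa [smul_smul, inv_mul_cancel₀ hc, one_smul] at this
    set M : Submodule F (V → F × F) := L ⊓ ℓ.comap e with hM
    -- dimension of M is at least n
    have hMdim : n ≤ Module.finrank F M := by
      set f : L →ₗ[F] (F × F) ⧸ ℓ := ℓ.mkQ ∘ₗ e ∘ₗ L.subtype with hf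
      have hker : (LinearMap.ker f).map L.subtype = M := by
        ext B
        simp only [Submodule.mem_map, LinearMap.mem_ker, hM, Submodule.mem_inf,
          Submodule.mem_comap]
        constructor
        · rintro ⟨⟨B, hBL⟩, hBf, rfl⟩
          refine ⟨hBL, ?_⟩
          have : ℓ.mkQ (e B) = 0 := hBf
          exact (Submodule.Quotient.mk_eq_zero ℓ).mp this
        · rintro ⟨hBL, hBe⟩
          exact ⟨⟨B, hBL⟩, by simpa [hf, Submodule.Quotient.mk_eq_zero] using hBe, rfl⟩
      have h1 : Module.finrank F (LinearMap.ker f) = Module.finrank F M := by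
        rw [← hker, Submodule.finrank_map_subtype_eq]
      have h2 := LinearMap.finrank_range_add_finrank_ker f
      have h3 : Module.finrank F (LinearMap.range f) ≤ Module.finrank F ((F × F) ⧸ ℓ) :=
        Submodule.finrank_le _
      have h4 : Module.finrank F ((F × F) ⧸ ℓ) + Module.finrank F ℓ
          = Module.finrank F (F × F) := Submodule.finrank_quotient_add_finrank ℓ
      have h5 : Module.finrank F ℓ = 1 := finrank_span_singleton hx0
      have h6 : Module.finrank F (F × F) = 2 := by
        simp [Module.finrank_prod]
      rw [hdim] at h2
      omega
    -- the restriction map is injective on M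
    have hMker : ∀ B ∈ M, ρ B = 0 → B = 0 := by
      intro B hBM hBρ
      have hBS : e B ∈ S := ⟨B, ⟨hBM.1, LinearMap.mem_ker.mpr hBρ⟩, rfl⟩
      have h0 : B v₀ = 0 := hℓS _ hBM.2 hBS
      funext v
      by_cases hv : v = v₀
      · rw [hv]; exact h0
      · exact congrFun hBρ ⟨v, hv⟩
    set L' : Submodule F (V' → F × F) := M.map ρ with hL'
    -- L' is isotropic
    have hiso' : ∀ A' ∈ L', ∀ B' ∈ L', formKV A' B' = 0 := by
      rintro _ ⟨B, hB, rfl⟩ _ ⟨C, hC, rfl⟩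
      have hsplit : formKV B C = formK (B v₀) (C v₀) + formKV (ρ B) (ρ C) := by
        rw [formKV, Fintype.sum_eq_add_sum_compl v₀, formKV]
        congr 1
        rw [Finset.sum_subtype (p := fun v => v ≠ v₀) ({v₀}ᶜ : Finset V)
          (fun v => by simp) (fun v => formK (B v) (C v))]
        rfl
      have hBC : formK (B v₀) (C v₀) = 0 := by
        obtain ⟨b, hb⟩ := Submodule.mem_span_singleton.mp hB.2
        obtain ⟨c, hc⟩ := Submodule.mem_span_singleton.mp hC.2
        rw [show B v₀ = b • x from hb.symm, show C v₀ = c • x from hc.symm]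
        simp only [formK, Prod.smul_fst, Prod.smul_snd, smul_eq_mul]
        ring
      have := hiso B hB.1 C hC.1
      rw [hsplit, hBC, zero_add] at this
      exact this
    -- dimension of L'
    have hdim' : Module.finrank F L' = n := by
      refine le_antisymm (hcard' ▸ isotropic_finrank_le L' hiso') ?_
      set g : M →ₗ[F] (V' → F × F) := ρ ∘ₗ M.subtype with hg
      have hrange : LinearMap.range g = L' := by
        rw [hg, LinearMap.range_comp, Submodule.range_subtype]
      have hkerg : LinearMap.ker g = ⊥ := by
        rw [Submodule.eq_bot_iff]
        intro y hy
        have := hMker y.val y.property hy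
        exact Subtype.ext this
      have h2 := LinearMap.finrank_range_add_finrank_ker g
      rw [hrange, hkerg, finrank_bot, add_zero] at h2
      omega
    obtain ⟨A', hA'c, hA'⟩ := IH V' hcard' L' hdim' hiso'
    set A : V → F × F := fun v => if h : v = v₀ then x else A' ⟨v, h⟩ with hA
    have hAv₀ : A v₀ = x := by simp [hA]
    have hAv : ∀ (w : V'), A w.val = A' w := fun w => by
      simp [hA, w.property]
    refine ⟨A, ?_, ?_⟩
    · intro v
      by_cases h : v = v₀
      · rw [h, hAv₀]; exact hx0
      · rw [show v = (⟨v, h⟩ : V').val from rfl, hAv]; exact hA'c _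
    · rw [Submodule.eq_bot_iff]
      intro B hB
      rw [Submodule.mem_inf] at hB
      obtain ⟨hBhat, hBL⟩ := hB
      obtain ⟨c, hc⟩ := mem_hatSub.mp hBhat
      have hBv₀ : B v₀ ∈ ℓ := by
        rw [hc v₀, hAv₀]
        exact ℓ.smul_mem _ (Submodule.mem_span_singleton_self x)
      have hBM : B ∈ M := ⟨hBL, hBv₀⟩
      have hρhat : ρ B ∈ hatSub A' := by
        refine mem_hatSub.mpr ⟨fun w => c w.val, fun w => ?_⟩
        rw [hρ_apply, hc w.val, hAv]
      have hρL' : ρ B ∈ L' := ⟨B, hBM, rfl⟩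
      have hρ0 : ρ B = 0 := by
        have : ρ B ∈ hatSub A' ⊓ L' := Submodule.mem_inf.mpr ⟨hρhat, hρL'⟩
        rwa [hA', Submodule.mem_bot] at this
      exact hMker B hBM hρ0

end Key



variable {F : Type} [Field F] [Fintype F] {V : Type} [Fintype V] [DecidableEq V] [Nonempty V]


/-- Every isotropic system has at least one Eulerian vector. -/
theorem exists_eulerian (hchar : ringChar F ≠ 2)
    (L : Submodule F (V → F × F)) (hL : IsIsotropic L) :
    ∃ A : V → F × F, IsEulerian L A := by
  obtain ⟨A, hc, hinf⟩ := key_eulerian (Fintype.card V) V rfl L hL.1 hL.2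
  exact ⟨A, hc, hinf⟩
end

section
/- The set of Eulerian vectors of an isotropic system L has the switching property: if A is an Eulerian vector of L, v ∈ V, and x₁, x₂ ∈ K are two nonzero vectors that are linearly independent over F_q, then at least one of the two vectors A − A_v + E_{v,x₁} and A − A_v + E_{v,x₂} is an Eulerian vector of L. Moreover, if A is Eulerian and A' agrees with A at all coordinates except that A'(v) = r·A(v) for some nonzero r ∈ F_q, then A' is also an Eulerian vector of L. -/
open Matrix

variable {F : Type} [Field F] [Fintype F] {V : Type} [Fintype V] [DecidableEq V] [Nonempty V]


lemma formK_self' (a : F × F) : formK a a = 0 := by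
  simp [formK, mul_comm]

lemma formK_smul' (c d : F) (a b : F × F) :
    formK (c • a) (d • b) = c * d * formK a b := by
  simp [formK]; ring

lemma formK_ne_zero' {x₁ x₂ : F × F} (h1 : x₁ ≠ 0)
    (h : LinearIndependent F ![x₁, x₂]) : formK x₁ x₂ ≠ 0 := by
  intro h0
  rw [Fintype.linearIndependent_iff] at h
  have h1' : x₁.1 ≠ 0 ∨ x₁.2 ≠ 0 := by
    by_contra hc
    push_neg at hc
    exact h1 (Prod.ext hc.1 hc.2)
  rcases h1' with hx | hx
  · have := h ![x₂.1, -x₁.1] ?_ 1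
    · simp at this; exact hx this
    · simp [Fin.sum_univ_two]
      refine Prod.ext ?_ ?_ <;> simp [formK] at h0 ⊢
      · ring
      · linear_combination -h0
  · have := h ![x₂.2, -x₁.2] ?_ 1
    · simp at this; exact hx this
    · simp [Fin.sum_univ_two]
      refine Prod.ext ?_ ?_ <;> simp [formK] at h0 ⊢
      · linear_combination h0
      · ring

lemma hatSub_eval {A B : V → F × F} (h : B ∈ hatSub A) (w : V) :
    ∃ c : F, B w = c • A w := by
  rw [hatSub, Submodule.mem_span_range_iff_exists_fun] at h
  obtain ⟨c, hc⟩ := h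
  refine ⟨c w, ?_⟩
  rw [← hc]
  simp only [Finset.sum_apply, Pi.smul_apply, Ev]
  rw [Finset.sum_eq_single_of_mem w (Finset.mem_univ w)]
  · simp
  · intro b _ hb
    simp [hb.symm]

lemma hatSub_of_eval {A B : V → F × F} (h : ∀ w, ∃ c : F, B w = c • A w) :
    B ∈ hatSub A := by
  choose c hc using h
  rw [hatSub, Submodule.mem_span_range_iff_exists_fun]
  refine ⟨c, funext fun w => ?_⟩
  simp only [Finset.sum_apply, Pi.smul_apply, Ev]
  rw [Finset.sum_eq_single_of_mem w (Finset.mem_univ w)]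
  · simp [hc w]
  · intro b _ hb
    simp [hb.symm]

lemma switch_apply (A : V → F × F) (v : V) (x : F × F) (w : V) :
    (A - Ev v (A v) + Ev v x) w = if w = v then x else A w := by
  simp only [Pi.add_apply, Pi.sub_apply, Ev]
  split_ifs with h
  · subst h; abel
  · abel

/-- The set of Eulerian vectors has the switching property, and it is closed
under replacing a coordinate by a nonzero scalar multiple. -/
theorem eulerian_switching (hchar : ringChar F ≠ 2)
    (L : Submodule F (V → F × F)) (hL : IsIsotropic L) :
    (∀ A : V → F × F, IsEulerian L A → ∀ (v : V) (x₁ x₂ : F × F),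
        x₁ ≠ 0 → x₂ ≠ 0 → LinearIndependent F ![x₁, x₂] →
        IsEulerian L (A - Ev v (A v) + Ev v x₁) ∨
        IsEulerian L (A - Ev v (A v) + Ev v x₂)) ∧
    (∀ A : V → F × F, IsEulerian L A → ∀ (v : V) (r : F), r ≠ 0 →
        IsEulerian L (Function.update A v (r • A v))) := by
  constructor
  · intro A hA v x₁ x₂ hx₁ hx₂ hind
    by_contra hcon
    push_neg at hcon
    obtain ⟨h1, h2⟩ := hcon
    -- extract nonzero witnesses from failure of Eulerian-ness
    have key : ∀ x : F × F, x ≠ 0 → ¬ IsEulerian L (A - Ev v (A v) + Ev v x) →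
        ∃ B ∈ L, B ≠ 0 ∧ (∀ w, w ≠ v → ∃ c : F, B w = c • A w) ∧
          ∃ c : F, c ≠ 0 ∧ B v = c • x := by
      intro x hx hne
      have hcomp : CompleteVec (A - Ev v (A v) + Ev v x) := by
        intro w
        rw [switch_apply]
        split_ifs with h
        · exact hx
        · exact hA.1 w
      have hbot : hatSub (A - Ev v (A v) + Ev v x) ⊓ L ≠ ⊥ := by
        intro hc
        exact hne ⟨hcomp, hc⟩
      rw [Submodule.ne_bot_iff] at hbot
      obtain ⟨B, hB, hB0⟩ := hbot
      rw [Submodule.mem_inf] at hB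
      have heval : ∀ w, ∃ c : F, B w = c • (if w = v then x else A w) := by
        intro w
        obtain ⟨c, hc⟩ := hatSub_eval hB.1 w
        exact ⟨c, by rwa [switch_apply] at hc⟩
      have hv : B v ≠ 0 := by
        intro hv0
        apply hB0
        have : B ∈ hatSub A ⊓ L := by
          rw [Submodule.mem_inf]
          refine ⟨hatSub_of_eval fun w => ?_, hB.2⟩
          rcases eq_or_ne w v with rfl | hw
          · exact ⟨0, by simp [hv0]⟩
          · obtain ⟨c, hc⟩ := heval w
            exact ⟨c, by rwa [if_neg hw] at hc⟩
        rw [hA.2] at this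
        exact this
      obtain ⟨c, hc⟩ := heval v
      rw [if_pos rfl] at hc
      refine ⟨B, hB.2, hB0, fun w hw => ?_, c, ?_, hc⟩
      · obtain ⟨c', hc'⟩ := heval w
        exact ⟨c', by rwa [if_neg hw] at hc'⟩
      · intro hc0
        exact hv (by simp [hc, hc0])
    obtain ⟨B₁, hB₁L, hB₁0, hB₁w, c₁, hc₁, hBv₁⟩ := key x₁ hx₁ h1
    obtain ⟨B₂, hB₂L, hB₂0, hB₂w, c₂, hc₂, hBv₂⟩ := key x₂ hx₂ h2
    have hform : formKV B₁ B₂ = 0 := hL.2 B₁ hB₁L B₂ hB₂L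
    rw [formKV, Finset.sum_eq_single_of_mem v (Finset.mem_univ v)] at hform
    · rw [hBv₁, hBv₂, formK_smul'] at hform
      refine formK_ne_zero' hx₁ hind ?_
      rcases mul_eq_zero.mp hform with h | h
      · exact absurd h (mul_ne_zero hc₁ hc₂)
      · exact h
    · intro w _ hw
      obtain ⟨d₁, hd₁⟩ := hB₁w w hw
      obtain ⟨d₂, hd₂⟩ := hB₂w w hw
      rw [hd₁, hd₂, formK_smul', formK_self', mul_zero]
  · intro A hA v r hr
    constructor
    · intro w
      rcases eq_or_ne w v with rfl | hw
      · rw [Function.update_self]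
        exact smul_ne_zero hr (hA.1 w)
      · rw [Function.update_of_ne hw]
        exact hA.1 w
    · have heq : hatSub (Function.update A v (r • A v)) = hatSub A := by
        apply le_antisymm <;> intro B hB <;> apply hatSub_of_eval <;> intro w
        · obtain ⟨c, hc⟩ := hatSub_eval hB w
          rcases eq_or_ne w v with rfl | hw
          · rw [Function.update_self] at hc
            exact ⟨c * r, by rw [hc, smul_smul]⟩
          · rw [Function.update_of_ne hw] at hc
            exact ⟨c, hc⟩
        · obtain ⟨c, hc⟩ := hatSub_eval hB w
          rcases eq_or_ne w v with rfl | hw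
          · refine ⟨c * r⁻¹, ?_⟩
            rw [Function.update_self, smul_smul, mul_assoc, inv_mul_cancel₀ hr,
              mul_one, hc]
          · rw [Function.update_of_ne hw]
            exact ⟨c, hc⟩
      rw [heq]
      exact hA.2
end
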